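/- arXiv:1803.04817 — 18 statements merged into one kernel-verified Lean document; each statement's English description precedes it below -/
import Mathlib

section
/- Let A be a commutative ring and let 𝔭, 𝔮 be prime ideals of A. Then A_𝔭 ⊗_A A_𝔮 = 0 if and only if there exist f ∈ A \ 𝔭 and g ∈ A \ 𝔮 such that fg = 0. -/
open scoped TensorProduct

theorem localization_tensor_eq_zero_iff (A : Type*) [CommRing A]
    (p q : Ideal A) [p.IsPrime] [q.IsPrime] :
    Subsingleton (Localization.AtPrime p ⊗[A] Localization.AtPrime q) ↔
      ∃ f ∉ p, ∃ g ∉ q, f * g = 0 := by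
  have hbc : IsBaseChange (Localization.AtPrime q)
      (LocalizedModule.mkLinearMap q.primeCompl (Localization.AtPrime p)) :=
    IsLocalizedModule.isBaseChange q.primeCompl (Localization.AtPrime q) _
  let f := LocalizedModule.mkLinearMap q.primeCompl (Localization.AtPrime p)
  let e : (Localization.AtPrime q) ⊗[A] (Localization.AtPrime p) ≃ₗ[Localization.AtPrime q]
      LocalizedModule q.primeCompl (Localization.AtPrime p) := hbc.equiv
  have h5 : e ((1 : Localization.AtPrime q) ⊗ₜ[A] (1 : Localization.AtPrime p)) =
      LocalizedModule.mk (1 : Localization.AtPrime p) (1 : q.primeCompl) := by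
    show hbc.equiv _ = _
    rw [hbc.equiv_tmul, one_smul]
    rfl
  have key : Subsingleton (Localization.AtPrime p ⊗[A] Localization.AtPrime q) ↔
      LocalizedModule.mk (1 : Localization.AtPrime p) (1 : q.primeCompl) = 0 := by
    rw [← subsingleton_iff_zero_eq_one]
    constructor
    · intro h
      have h1 : (1 : Localization.AtPrime p) ⊗ₜ[A] (1 : Localization.AtPrime q) = 0 := by
        rw [← Algebra.TensorProduct.one_def]; exact h.symm
      have h2 : (1 : Localization.AtPrime q) ⊗ₜ[A] (1 : Localization.AtPrime p) = 0 := by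
        have := (LinearEquiv.map_eq_zero_iff
          (TensorProduct.comm A (Localization.AtPrime p) (Localization.AtPrime q))).mpr h1
        rwa [TensorProduct.comm_tmul] at this
      rw [← h5, h2, e.map_zero]
    · intro h
      have h2 : (1 : Localization.AtPrime q) ⊗ₜ[A] (1 : Localization.AtPrime p) = 0 := by
        rw [← LinearEquiv.map_eq_zero_iff e, h5]
        exact h
      have h1 : (1 : Localization.AtPrime p) ⊗ₜ[A] (1 : Localization.AtPrime q) = 0 := by
        rw [← LinearEquiv.map_eq_zero_iff
          (TensorProduct.comm A (Localization.AtPrime p) (Localization.AtPrime q)),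
          TensorProduct.comm_tmul]
        exact h2
      rw [Algebra.TensorProduct.one_def, h1]
  rw [key]
  have hmk : LocalizedModule.mk (1 : Localization.AtPrime p) (1 : q.primeCompl) = f 1 := rfl
  rw [hmk, IsLocalizedModule.eq_zero_iff q.primeCompl f]
  constructor
  · rintro ⟨g, hg⟩
    have h0 : algebraMap A (Localization.AtPrime p) (g : A) = 0 := by
      rw [Algebra.algebraMap_eq_smul_one, ← Submonoid.smul_def, hg]
    rw [IsLocalization.map_eq_zero_iff p.primeCompl] at h0
    obtain ⟨m, hm⟩ := h0
    exact ⟨m, m.2, g, g.2, hm⟩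
  · rintro ⟨a, ha, b, hb, hab⟩
    refine ⟨⟨b, hb⟩, ?_⟩
    rw [Submonoid.smul_def, ← Algebra.algebraMap_eq_smul_one,
      IsLocalization.map_eq_zero_iff p.primeCompl]
    exact ⟨⟨a, ha⟩, hab⟩
end

section
/- If 𝔭 and 𝔮 are distinct minimal prime ideals of a commutative ring A, then A_𝔭 ⊗_A A_𝔮 = 0. -/
open scoped TensorProduct

/-
Since 𝔭 ≠ 𝔮 are both minimal, 𝔭 ⊄ 𝔮; pick x ∈ 𝔭 \ 𝔮. The ring A_𝔭 has 𝔭A_𝔭 as its only prime,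
so the image of x there is nilpotent, while its image in A_𝔮 is a unit. In A_𝔭 ⊗_A A_𝔮 the image
of x is therefore both nilpotent and a unit, which forces 1 = 0.
-/

theorem Ideal.not_le_of_mem_minimalPrimes {A : Type*} [CommRing A] {p q : Ideal A}
    (hp : p ∈ minimalPrimes A) (hq : q ∈ minimalPrimes A) (hpq : p ≠ q) : ¬p ≤ q :=
  fun hle ↦ hpq <| ((IsMinimalPrime.iff_minimal q).mp hq).eq_of_le
    (Ideal.IsMinimalPrime.isPrime hp) hle

theorem IsLocalization.AtPrime.isNilpotent_algebraMap_of_mem_minimalPrimes {A : Type*}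
    [CommRing A] (S : Type*) [CommRing S] [Algebra A S] {p : Ideal A} [p.IsPrime]
    [IsLocalization.AtPrime S p] (hp : p ∈ minimalPrimes A) {x : A} (hx : x ∈ p) :
    IsNilpotent (algebraMap A S x) := by
  have hmem : algebraMap A S x ∈ p.map (algebraMap A S) := Ideal.mem_map_of_mem _ hx
  rw [← IsLocalization.AtPrime.radical_map_of_mem_minimalPrimes S p ⊥ hp, Ideal.map_bot] at hmem
  exact mem_nilradical.mp hmem

theorem Algebra.TensorProduct.subsingleton_of_isNilpotent_of_isUnit {R S T : Type*}
    [CommSemiring R] [Semiring S] [Semiring T] [Algebra R S] [Algebra R T] {x : R}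
    (hS : IsNilpotent (algebraMap R S x)) (hT : IsUnit (algebraMap R T x)) :
    Subsingleton (S ⊗[R] T) := by
  have hnil := hS.map (includeLeft (S := R) : S →ₐ[R] S ⊗[R] T)
  have hunit := hT.map (includeRight : T →ₐ[R] S ⊗[R] T)
  rw [AlgHom.commutes] at hnil hunit
  obtain ⟨n, hn⟩ := hnil
  have hzero : IsUnit (0 : S ⊗[R] T) := hn ▸ hunit.pow n
  exact subsingleton_of_zero_eq_one (isUnit_zero_iff.mp hzero)

theorem tensor_localizations_distinct_minimal_primes (A : Type*) [CommRing A]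
    (p q : Ideal A) (hp : p ∈ minimalPrimes A) (hq : q ∈ minimalPrimes A) (hpq : p ≠ q)
    [p.IsPrime] [q.IsPrime] :
    Subsingleton (Localization.AtPrime p ⊗[A] Localization.AtPrime q) := by
  obtain ⟨x, hxp, hxq⟩ :=
    SetLike.not_le_iff_exists.mp (Ideal.not_le_of_mem_minimalPrimes hp hq hpq)
  exact Algebra.TensorProduct.subsingleton_of_isNilpotent_of_isUnit
    (IsLocalization.AtPrime.isNilpotent_algebraMap_of_mem_minimalPrimes _ hp hxp)
    ((IsLocalization.AtPrime.isUnit_to_map_iff _ q x).mpr hxq)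
end

section
/- A commutative ring A has the property that every prime ideal is maximal if and only if for any two distinct prime ideals 𝔭, 𝔮 of A there exist f ∈ A \ 𝔭 and g ∈ A \ 𝔮 with fg = 0. -/
/-!
If every prime is maximal, two distinct primes `𝔭, 𝔮` are comaximal: `a + b = 1` with `a ∈ 𝔭`,
`b ∈ 𝔮`. Every prime is then minimal, so `a` is nilpotent in `A_𝔭` and `b` in `A_𝔮`, i.e.
`s * a ^ n = 0` and `t * b ^ m = 0` with `s ∉ 𝔭`, `t ∉ 𝔮`; as `b ∉ 𝔭` and `a ∉ 𝔮`, the pair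
`f = s * b ^ m`, `g = t * a ^ n` works. Conversely, `f * g = 0` with `f ∉ 𝔭`, `g ∉ 𝔮` forces
`g ∈ 𝔭 \ 𝔮`, so `𝔭 ⊄ 𝔮`; applied to a prime inside a maximal ideal this shows they coincide.
-/

namespace Ideal

variable {A : Type*} [CommSemiring A]

theorem exists_mul_pow_eq_zero_of_mem_minimalPrimes {p : Ideal A} (hp : p ∈ minimalPrimes A)
    {a : A} (ha : a ∈ p) : ∃ s ∉ p, ∃ n : ℕ, s * a ^ n = 0 := by
  have := hp.1.1
  have : Ring.KrullDimLE 0 (Localization.AtPrime p) := .of_isLocalization p hp _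
  obtain ⟨n, hn⟩ : IsNilpotent (algebraMap A (Localization.AtPrime p) a) :=
    Ring.KrullDimLE.isNilpotent_iff_mem_maximalIdeal.mpr
      ((IsLocalization.AtPrime.to_map_mem_maximal_iff _ p a).mpr ha)
  rw [← map_pow, IsLocalization.map_eq_zero_iff p.primeCompl] at hn
  obtain ⟨⟨s, hs⟩, hs0⟩ := hn
  exact ⟨s, hs, n, hs0⟩

theorem exists_mul_eq_zero_of_sup_eq_top {p q : Ideal A} (hp : p ∈ minimalPrimes A)
    (hq : q ∈ minimalPrimes A) (hpq : p ⊔ q = ⊤) : ∃ f ∉ p, ∃ g ∉ q, f * g = 0 := by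
  obtain ⟨a, ha, b, hb, hab⟩ := Submodule.mem_sup.mp (hpq ▸ Submodule.mem_top (x := (1 : A)))
  have hbp : b ∉ p := fun hbp ↦ hp.1.1.ne_top (p.eq_top_of_isUnit_mem
    (hab ▸ p.add_mem ha hbp) isUnit_one)
  have haq : a ∉ q := fun haq ↦ hq.1.1.ne_top (q.eq_top_of_isUnit_mem
    (hab ▸ q.add_mem haq hb) isUnit_one)
  obtain ⟨s, hs, n, hsa⟩ := exists_mul_pow_eq_zero_of_mem_minimalPrimes hp ha
  obtain ⟨t, ht, m, htb⟩ := exists_mul_pow_eq_zero_of_mem_minimalPrimes hq hb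
  refine ⟨s * b ^ m, hp.1.1.mul_notMem hs (mt (hp.1.1.mem_of_pow_mem m) hbp),
    t * a ^ n, hq.1.1.mul_notMem ht (mt (hq.1.1.mem_of_pow_mem n) haq), ?_⟩
  calc s * b ^ m * (t * a ^ n) = s * a ^ n * (t * b ^ m) := by ring
    _ = 0 := by rw [hsa, zero_mul]

theorem not_le_of_mul_eq_zero {p q : Ideal A} (hp : p.IsPrime) {f g : A} (hf : f ∉ p)
    (hg : g ∉ q) (hfg : f * g = 0) : ¬p ≤ q := fun hpq ↦
  hg (hpq ((hp.mem_or_mem (hfg ▸ p.zero_mem)).resolve_left hf))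

end Ideal

theorem primes_maximal_iff_annihilating_pairs (A : Type*) [CommRing A] :
    (∀ p : Ideal A, p.IsPrime → p.IsMaximal) ↔
      ∀ p q : Ideal A, p.IsPrime → q.IsPrime → p ≠ q →
        ∃ f ∉ p, ∃ g ∉ q, f * g = 0 := by
  refine ⟨fun H p q hp hq hpq ↦ ?_, fun H p hp ↦ ?_⟩
  · have : Ring.KrullDimLE 0 A := .mk₀ H
    exact Ideal.exists_mul_eq_zero_of_sup_eq_top (Ideal.mem_minimalPrimes_iff_isPrime.mpr hp)
      (Ideal.mem_minimalPrimes_iff_isPrime.mpr hq) ((H p hp).coprime_of_ne (H q hq) hpq)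
  · obtain ⟨m, hm, hpm⟩ := p.exists_le_maximal hp.ne_top
    obtain rfl | hne := eq_or_ne p m
    · exact hm
    obtain ⟨f, hf, g, hg, hfg⟩ := H p m hp hm.isPrime hne
    exact absurd hpm (Ideal.not_le_of_mul_eq_zero hp hf hg hfg)
end

section
/- For a commutative ring A, every prime ideal of A is maximal if and only if the Zariski topology on Spec(A) is Hausdorff. -/
theorem primes_maximal_iff_zariski_hausdorff (A : Type*) [CommRing A] :
    (∀ p : Ideal A, p.IsPrime → p.IsMaximal) ↔ T2Space (PrimeSpectrum A) := by
  constructor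
  · intro hmax
    constructor
    intro x y hxy
    -- pick g ∈ x.asIdeal \ y.asIdeal
    have hxm := hmax x.asIdeal x.isPrime
    have hym := hmax y.asIdeal y.isPrime
    have hne : x.asIdeal ≠ y.asIdeal := fun h => hxy (PrimeSpectrum.ext h)
    have hnle : ¬ x.asIdeal ≤ y.asIdeal := fun hle => hne (hxm.eq_of_le hym.ne_top hle)
    obtain ⟨g, hgx, hgy⟩ := Set.not_subset.mp hnle
    -- localize at x
    let L := Localization.AtPrime x.asIdeal
    have hnil : IsNilpotent (algebraMap A L g) := by
      rw [← mem_nilradical, nilradical_eq_sInf, Ideal.mem_sInf]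
      intro Q hQ
      have hQp : Q.IsPrime := hQ
      have hcp : (Q.comap (algebraMap A L)).IsPrime := Ideal.IsPrime.comap _
      have hdisj : Disjoint (x.asIdeal.primeCompl : Set A) (Q.comap (algebraMap A L) : Set A) :=
        ((IsLocalization.isPrime_iff_isPrime_disjoint x.asIdeal.primeCompl L Q).mp hQp).2
      have hle : Q.comap (algebraMap A L) ≤ x.asIdeal := by
        intro a ha
        by_contra hax
        exact Set.disjoint_left.mp hdisj hax ha
      have heq : Q.comap (algebraMap A L) = x.asIdeal :=
        (hmax _ hcp).eq_of_le hxm.ne_top hle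
      have : g ∈ Q.comap (algebraMap A L) := by rw [heq]; exact hgx
      exact this
    obtain ⟨n, hn⟩ := hnil
    rw [← map_pow, IsLocalization.map_eq_zero_iff x.asIdeal.primeCompl] at hn
    obtain ⟨s, hs⟩ := hn
    refine ⟨PrimeSpectrum.basicOpen (s : A), PrimeSpectrum.basicOpen g,
      (PrimeSpectrum.basicOpen (s : A)).2, (PrimeSpectrum.basicOpen g).2, s.2, hgy, ?_⟩
    rw [Set.disjoint_iff_inter_eq_empty]
    have : PrimeSpectrum.basicOpen ((s : A) * g) = ⊥ := by
      rw [PrimeSpectrum.basicOpen_eq_bot_iff]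
      refine ⟨n + 1, ?_⟩
      have h3 : ((s : A) * g) ^ (n + 1) = ((s:A)^n * g) * ((s:A) * g^n) := by ring
      rw [h3, hs, mul_zero]
    have h2 := PrimeSpectrum.basicOpen_mul (s : A) g
    rw [this] at h2
    have := congrArg (fun o : TopologicalSpace.Opens (PrimeSpectrum A) => (o : Set (PrimeSpectrum A))) h2
    simpa using this.symm
  · intro _
    intro p hp
    have : IsClosed ({⟨p, hp⟩} : Set (PrimeSpectrum A)) := isClosed_singleton
    exact (PrimeSpectrum.isClosed_singleton_iff_isMaximal _).mp this
end

section
/- For a commutative ring A, every prime ideal of A is maximal if and only if for every prime ideal 𝔭 the canonical localization map A → A_𝔭 is surjective. -/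
/-!
If every prime is maximal, each `s : A` satisfies `s ^ n * (1 - a * s) = 0` for some `n` and `a`:
otherwise the elements `s ^ n * (1 - a * s)` form a multiplicative set avoiding `0`, hence avoiding
some prime `q`; then `s ∉ q`, and as `q` is maximal some `1 - a * s` lies in `q`, a contradiction.
For `s ∉ 𝔭` this identity says `1 / s = a / 1` in `A_𝔭`, so `A → A_𝔭` is onto. Conversely, if
`A → A_𝔭` is onto, the maximal ideal of `A_𝔭` pulls back to a maximal ideal, namely `𝔭`.
-/

open IsLocalization

def Submonoid.powMulOneSubMul {A : Type*} [CommRing A] (s : A) : Submonoid A where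
  carrier := {x | ∃ (n : ℕ) (a : A), x = s ^ n * (1 - a * s)}
  one_mem' := ⟨0, 0, by ring⟩
  mul_mem' := by
    rintro _ _ ⟨n, a, rfl⟩ ⟨m, b, rfl⟩
    exact ⟨n + m, a + b - a * b * s, by ring⟩

theorem exists_pow_mul_one_sub_mul_eq_zero {A : Type*} [CommRing A]
    (h : ∀ p : Ideal A, p.IsPrime → p.IsMaximal) (s : A) :
    ∃ (n : ℕ) (a : A), s ^ n * (1 - a * s) = 0 := by
  by_contra! hne
  have hdisj : Disjoint ((⊥ : Ideal A) : Set A) (Submonoid.powMulOneSubMul s) :=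
    Set.disjoint_left.mpr fun _ hx ⟨n, a, hna⟩ => hne n a (hna ▸ hx)
  obtain ⟨q, hq, -, hq_disj⟩ := Ideal.exists_le_prime_disjoint ⊥ _ hdisj
  have hs : s ∉ q := fun hs => Set.disjoint_left.mp hq_disj hs ⟨1, 0, by ring⟩
  obtain ⟨a, i, hi, hai⟩ := (h q hq).exists_inv hs
  have : 1 - a * s ∈ q := by rwa [show 1 - a * s = i by linear_combination -hai]
  exact Set.disjoint_left.mp hq_disj this ⟨0, a, by ring⟩

theorem IsLocalization.algebraMap_surjective_of_exists_pow_mul_one_sub_mul_eq_zero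
    {A S : Type*} [CommRing A] [CommRing S] [Algebra A S] (M : Submonoid A) [IsLocalization M S]
    (h : ∀ s ∈ M, ∃ (n : ℕ) (a : A), s ^ n * (1 - a * s) = 0) :
    Function.Surjective (algebraMap A S) := by
  intro z
  obtain ⟨⟨r, s⟩, rfl⟩ := mk'_surjective M z
  obtain ⟨n, a, hna⟩ := h s s.2
  have has : algebraMap A S (a * s) = 1 := by
    rw [← map_one (algebraMap A S), eq_iff_exists M]
    exact ⟨⟨s ^ n, pow_mem s.2 n⟩, by linear_combination -hna⟩
  refine ⟨r * a, ?_⟩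
  rw [map_mul, eq_comm, mk'_eq_iff_eq_mul, mul_assoc, ← map_mul, has, mul_one]

theorem Ideal.IsPrime.isMaximal_of_algebraMap_surjective {A S : Type*} [CommRing A] [CommRing S]
    [Algebra A S] {p : Ideal A} [p.IsPrime] [IsLocalization.AtPrime S p]
    (h : Function.Surjective (algebraMap A S)) : p.IsMaximal := by
  have := AtPrime.isLocalRing S p
  have := Ideal.comap_isMaximal_of_surjective _ h (K := IsLocalRing.maximalIdeal S)
  rwa [← Ideal.under_def, AtPrime.under_maximalIdeal S p] at this

theorem primes_maximal_iff_localizations_surjective (A : Type*) [CommRing A] :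
    (∀ p : Ideal A, p.IsPrime → p.IsMaximal) ↔
      ∀ (p : Ideal A) (hp : p.IsPrime),
        Function.Surjective
          (algebraMap A (Localization (@Ideal.primeCompl A _ p hp))) := by
  refine ⟨fun h p hp => ?_, fun h p hp => hp.isMaximal_of_algebraMap_surjective (h p hp)⟩
  exact algebraMap_surjective_of_exists_pow_mul_one_sub_mul_eq_zero p.primeCompl fun s _ =>
    exists_pow_mul_one_sub_mul_eq_zero h s
end

section
/- For a commutative ring A, every prime ideal of A is maximal if and only if A/𝔑 is von Neumann regular (absolutely flat), where 𝔑 is the nilradical of A. -/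
theorem primes_maximal_iff_quotient_nilradical_vnr (A : Type*) [CommRing A] :
    (∀ p : Ideal A, p.IsPrime → p.IsMaximal) ↔
      ∀ x : A ⧸ nilradical A, ∃ y : A ⧸ nilradical A, x = x ^ 2 * y := by
  constructor
  · intro hmax x
    obtain ⟨a, rfl⟩ := Ideal.Quotient.mk_surjective x
    -- multiplicative set S = { a^n * (1 - a*y) }
    set S : Submonoid A :=
      { carrier := {z | ∃ n : ℕ, ∃ y : A, z = a ^ n * (1 - a * y)}
        one_mem' := ⟨0, 0, by ring⟩
        mul_mem' := by
          rintro u v ⟨n, y, rfl⟩ ⟨m, w, rfl⟩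
          exact ⟨n + m, y + w - a * y * w, by ring⟩ } with hS
    by_cases h0 : (0 : A) ∈ S
    · obtain ⟨n, y, hny⟩ := h0
      refine ⟨Ideal.Quotient.mk _ y, ?_⟩
      rw [← map_pow, ← map_mul, Ideal.Quotient.eq, mem_nilradical]
      rcases n with - | k
      · have h1 : (1 - a * y : A) = 0 := by
          have := hny; simpa using this.symm
        exact ⟨1, by rw [pow_one, show a - a ^ 2 * y = a * (1 - a * y) by ring, h1, mul_zero]⟩
      · refine ⟨k + 1, ?_⟩
        have : (a - a ^ 2 * y) ^ (k + 1) = a ^ (k + 1) * (1 - a * y) * (1 - a * y) ^ k := by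
          rw [show a - a ^ 2 * y = a * (1 - a * y) by ring, mul_pow, pow_succ (1 - a * y)]
          ring
        rw [this, ← hny, zero_mul]
    · exfalso
      have hdisj : Disjoint ((⊥ : Ideal A) : Set A) (S : Set A) := by
        rw [Set.disjoint_left]
        rintro z hz hzS
        simp only [SetLike.mem_coe, Ideal.mem_bot] at hz
        exact h0 (hz ▸ hzS)
      obtain ⟨p, hp, -, hpS⟩ := Ideal.exists_le_prime_disjoint ⊥ S hdisj
      have hpmax := hmax p hp
      have ha : a ∉ p := fun ha =>
        Set.disjoint_left.mp hpS ha ⟨1, 0, by ring⟩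
      obtain ⟨y, i, hi, hyi⟩ := hpmax.exists_inv ha
      have : (1 - a * y : A) ∈ p := by
        have : (1 - a * y : A) = i := by rw [← hyi]; ring
        rw [this]; exact hi
      exact Set.disjoint_left.mp hpS this ⟨0, y, by ring⟩
  · intro h p hp
    -- quotient is a field
    have hnil : nilradical A ≤ p := nilradical_le_prime p
    refine Ideal.Quotient.maximal_of_isField p ?_
    have : Nontrivial (A ⧸ p) := Ideal.Quotient.nontrivial_iff.mpr hp.ne_top
    refine ⟨exists_pair_ne _, mul_comm, ?_⟩
    · intro x hx
      obtain ⟨a, rfl⟩ := Ideal.Quotient.mk_surjective x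
      obtain ⟨y, hy⟩ := h (Ideal.Quotient.mk _ a)
      obtain ⟨b, rfl⟩ := Ideal.Quotient.mk_surjective y
      rw [← map_pow, ← map_mul, Ideal.Quotient.eq] at hy
      have hy' : a - a ^ 2 * b ∈ p := hnil hy
      have ha : a ∉ p := fun ha => hx (Ideal.Quotient.eq_zero_iff_mem.mpr ha)
      have : a * (1 - a * b) ∈ p := by
        have : a * (1 - a * b) = a - a ^ 2 * b := by ring
        rw [this]; exact hy'
      have h1 : (1 - a * b : A) ∈ p := ((hp.mem_or_mem this).resolve_left ha)
      refine ⟨Ideal.Quotient.mk p b, ?_⟩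
      rw [← map_mul, ← map_one (Ideal.Quotient.mk p), Ideal.Quotient.eq]
      have : a * b - 1 = -(1 - a * b) := by ring
      rw [this]; exact p.neg_mem h1
end

section
/- An ideal I of a commutative ring A satisfies that A/I is a flat A-module if and only if Ann(f) + I = A for all f ∈ I, equivalently, for each f ∈ I there exists g ∈ I such that f = fg. -/
namespace Ideal

variable {R : Type*} [CommRing R]

lemma Pure.of_forall_exists_eq_mul {I : Ideal R} (h : ∀ x ∈ I, ∃ y ∈ I, x = x * y) : I.Pure := by
  refine Pure.of_inf_eq_mul I fun J _ ↦ le_antisymm (fun x ⟨hxI, hxJ⟩ ↦ ?_) mul_le_inf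
  obtain ⟨y, hy, hxy⟩ := h x hxI
  rw [hxy, mul_comm x y]
  exact mul_mem_mul hy hxJ

lemma pure_iff_forall_exists_eq_mul {I : Ideal R} :
    I.Pure ↔ ∀ x ∈ I, ∃ y ∈ I, x = x * y :=
  ⟨fun _ _ hx ↦ exists_eq_mul_of_pure hx, Pure.of_forall_exists_eq_mul⟩

lemma annihilator_span_singleton_add_eq_top_iff (I : Ideal R) (x : R) :
    (span {x} : Submodule R R).annihilator + I = ⊤ ↔ ∃ y ∈ I, x = x * y := by
  rw [Submodule.add_eq_sup, eq_top_iff_one, Submodule.mem_sup]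
  constructor
  · rintro ⟨a, ha, y, hy, hay⟩
    have hax : a * x = 0 := (Submodule.mem_annihilator_span_singleton _ _).mp ha
    exact ⟨y, hy, by linear_combination (-x) * hay + hax⟩
  · rintro ⟨y, hy, hxy⟩
    refine ⟨1 - y, ?_, y, hy, sub_add_cancel 1 y⟩
    rw [Submodule.mem_annihilator_span_singleton, smul_eq_mul]
    linear_combination hxy

end Ideal

theorem pure_ideal_characterization (A : Type*) [CommRing A] (I : Ideal A) :
    (Module.Flat A (A ⧸ I) ↔
        ∀ f ∈ I, (Ideal.span {f} : Submodule A A).annihilator + I = ⊤) ∧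
      (Module.Flat A (A ⧸ I) ↔ ∀ f ∈ I, ∃ g ∈ I, f = f * g) := by
  simp only [Ideal.annihilator_span_singleton_add_eq_top_iff, and_self]
  exact Ideal.pure_iff_forall_exists_eq_mul
end

section
/- If a prime ideal 𝔭 of a commutative ring A is a pure ideal (i.e. A/𝔭 is a flat A-module), then 𝔭 is a minimal prime ideal of A. -/
/-! A pure ideal `I` satisfies `x = x * y` for some `y ∈ I` whenever `x ∈ I`. For a prime `p`
this makes every `x ∈ p` a zero divisor with witness `1 - y ∉ p`, and a prime all of whose
elements are killed by elements outside it contains no smaller prime. -/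

theorem Ideal.mem_minimalPrimes_of_forall_exists_mul_mem {R : Type*} [CommRing R]
    {I p : Ideal R} [hp : p.IsPrime] (hIp : I ≤ p) (h : ∀ x ∈ p, ∃ y ∉ p, x * y ∈ I) :
    p ∈ I.minimalPrimes := by
  refine ⟨⟨hp, hIp⟩, fun q ⟨hq, hIq⟩ hqp x hx => ?_⟩
  obtain ⟨y, hy, hxy⟩ := h x hx
  exact (hq.mem_or_mem (hIq hxy)).resolve_right fun hyq => hy (hqp hyq)

theorem Ideal.exists_notMem_mul_eq_zero_of_pure {R : Type*} [CommRing R] {p : Ideal R}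
    [p.IsPrime] [p.Pure] {x : R} (hx : x ∈ p) : ∃ y ∉ p, x * y = 0 := by
  obtain ⟨y, hy, hxy⟩ := Ideal.exists_eq_mul_of_pure hx
  refine ⟨1 - y, fun h => p.one_notMem ?_, ?_⟩
  · simpa using p.add_mem h hy
  · rw [mul_sub, mul_one, ← hxy, sub_self]

theorem pure_prime_is_minimal (A : Type*) [CommRing A] (p : Ideal A) (hp : p.IsPrime)
    (hpure : Module.Flat A (A ⧸ p)) : p ∈ minimalPrimes A :=
  have : p.Pure := hpure
  Ideal.mem_minimalPrimes_of_forall_exists_mul_mem bot_le fun _ hx =>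
    (Ideal.exists_notMem_mul_eq_zero_of_pure hx).imp fun _ ⟨hy, hxy⟩ => ⟨hy, Ideal.mem_bot.mpr hxy⟩
end

section
/- A commutative ring A is a Gelfand ring if and only if for any two distinct maximal ideals 𝔪, 𝔫 of A there exist f ∈ A \ 𝔪 and g ∈ A \ 𝔫 such that fg = 0. -/
theorem gelfand_iff_annihilating_pairs_maximal (A : Type*) [CommRing A] :
    (∀ p : Ideal A, p.IsPrime → ∃! m : Ideal A, m.IsMaximal ∧ p ≤ m) ↔
      ∀ m n : Ideal A, m.IsMaximal → n.IsMaximal → m ≠ n →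
        ∃ f ∉ m, ∃ g ∉ n, f * g = 0 := by
  constructor
  · intro h m n hm hn hmn
    by_contra hc
    push_neg at hc
    -- the multiplicative set of products f*g with f ∉ m, g ∉ n
    have hmP : m.IsPrime := hm.isPrime
    have hnP : n.IsPrime := hn.isPrime
    set M : Submonoid A := m.primeCompl ⊔ n.primeCompl with hM
    have hmem : ∀ x ∈ M, ∃ f ∉ m, ∃ g ∉ n, f * g = x := by
      intro x hx
      rw [hM, Submonoid.mem_sup] at hx
      obtain ⟨f, hf, g, hg, hfg⟩ := hx
      exact ⟨f, hf, g, hg, hfg⟩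
    have h0 : (0 : A) ∉ M := by
      intro h0
      obtain ⟨f, hf, g, hg, hfg⟩ := hmem 0 h0
      exact hc f hf g hg hfg
    have : Nontrivial (Localization M) := OreLocalization.nontrivial_iff.mpr h0
    obtain ⟨q, hq⟩ := Ideal.exists_maximal (Localization M)
    have hqP : q.IsPrime := hq.isPrime
    rw [IsLocalization.isPrime_iff_isPrime_disjoint M (Localization M) q] at hqP
    obtain ⟨hp, hd⟩ := hqP
    set p := q.comap (algebraMap A (Localization M)) with hpdef
    have hpm : p ≤ m := by
      intro x hx
      by_contra hxm
      exact Set.disjoint_left.mp hd (SetLike.le_def.mp le_sup_left hxm) hx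
    have hpn : p ≤ n := by
      intro x hx
      by_contra hxn
      exact Set.disjoint_left.mp hd (SetLike.le_def.mp le_sup_right hxn) hx
    obtain ⟨u, _, hu⟩ := h p hp
    exact hmn ((hu m ⟨hm, hpm⟩).trans (hu n ⟨hn, hpn⟩).symm)
  · intro h p hp
    obtain ⟨m, hm, hpm⟩ := Ideal.exists_le_maximal p hp.ne_top
    refine ⟨m, ⟨hm, hpm⟩, ?_⟩
    rintro n ⟨hn, hpn⟩
    by_contra hne
    obtain ⟨g, hg, f, hf, hfg⟩ := h n m hn hm hne
    have : g * f ∈ p := hfg ▸ p.zero_mem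
    rcases hp.mem_or_mem this with h1 | h1
    · exact hg (hpn h1)
    · exact hf (hpm h1)
end

section
/- A commutative ring A is a Gelfand ring if and only if for every maximal ideal 𝔪 of A the canonical localization map A → A_𝔪 is surjective. -/
/-!
The kernel of `A → A_𝔪` consists of the elements killed by something outside `𝔪`, so it lies in
every prime below `𝔪`; and the map is onto exactly when `𝔪` is the only maximal ideal containing
this kernel (then every `s ∉ 𝔪` is a unit modulo it). Given surjectivity, a prime `p ≤ 𝔪` and a
maximal `𝔪' ≥ p` therefore force `𝔪' = 𝔪`. Conversely, in a Gelfand ring two distinct maximal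
ideals `𝔪, 𝔪'` have no common prime below them, so `0` lies in the multiplicative set
`(A ∖ 𝔪)(A ∖ 𝔪')`: some `b ∉ 𝔪'` is killed by some `a ∉ 𝔪`, and `b` is in the kernel but not in `𝔪'`.
-/

open Ideal

section

variable {R : Type*} [CommRing R]

theorem Ideal.exists_mul_eq_zero_of_forall_isPrime_not_le (P Q : Ideal R) [P.IsPrime] [Q.IsPrime]
    (h : ∀ p : Ideal R, p.IsPrime → p ≤ P → ¬p ≤ Q) : ∃ a ∉ P, ∃ b ∉ Q, a * b = 0 := by
  by_contra! hne
  have hdisj : Disjoint ((⊥ : Ideal R) : Set R) ↑(P.primeCompl ⊔ Q.primeCompl) := by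
    rw [Set.disjoint_left]
    rintro _ (rfl : _ = (0 : R)) h0
    obtain ⟨a, ha, b, hb, hab⟩ := Submonoid.mem_sup.1 h0
    exact hne a ha b hb hab
  obtain ⟨p, hp, -, hpS⟩ := exists_le_prime_disjoint ⊥ _ hdisj
  have hpP : p ≤ P := fun x hx => by_contra fun hxP =>
    Set.disjoint_left.1 hpS hx (le_sup_left (a := P.primeCompl) hxP)
  have hpQ : p ≤ Q := fun x hx => by_contra fun hxQ =>
    Set.disjoint_left.1 hpS hx (le_sup_right (b := Q.primeCompl) hxQ)
  exact h p hp hpP hpQ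

namespace IsLocalization

variable {M : Submonoid R} (S : Type*) [CommRing S] [Algebra R S] [IsLocalization M S]

theorem ker_algebraMap_le {p : Ideal R} [p.IsPrime] (hp : Disjoint (M : Set R) p) :
    RingHom.ker (algebraMap R S) ≤ p := by
  intro a ha
  obtain ⟨t, ht⟩ := (map_eq_zero_iff M S a).1 ha
  exact (‹p.IsPrime›.mem_or_mem (ht ▸ p.zero_mem)).resolve_left (Set.disjoint_left.1 hp t.2)

theorem algebraMap_surjective_iff_forall_isMaximal :
    Function.Surjective (algebraMap R S) ↔
      ∀ m : Ideal R, m.IsMaximal → RingHom.ker (algebraMap R S) ≤ m → Disjoint (M : Set R) m := by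
  constructor
  · intro h m hm hker
    refine Set.disjoint_left.2 fun s hsM hsm => hm.ne_top ((eq_top_iff_one m).2 ?_)
    obtain ⟨u, hu⟩ := h (mk' S 1 ⟨s, hsM⟩)
    have hus : u * s - 1 ∈ RingHom.ker (algebraMap R S) := by
      rw [RingHom.mem_ker, map_sub, map_mul, hu, mk'_spec, sub_self]
    simpa using m.sub_mem (m.mul_mem_left u hsm) (hker hus)
  · intro h z
    obtain ⟨⟨a, s⟩, rfl⟩ := mk'_surjective M z
    have hs : span {(s : R)} ⊔ RingHom.ker (algebraMap R S) = ⊤ := by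
      by_contra hne
      obtain ⟨m, hm, hle⟩ := exists_le_maximal _ hne
      exact Set.disjoint_left.1 (h m hm (le_sup_right.trans hle)) s.2
        (hle (mem_sup_left (mem_span_singleton_self _)))
    obtain ⟨u, k, hk, hu⟩ := mem_span_singleton_sup.1 ((eq_top_iff_one _).1 hs)
    refine ⟨u * a, ?_⟩
    rw [eq_mk'_iff_mul_eq, ← map_mul, show u * a * s = a - a * k by linear_combination a * hu,
      map_sub, map_mul, RingHom.mem_ker.1 hk, mul_zero, sub_zero]

end IsLocalization

theorem Localization.AtPrime.algebraMap_surjective_iff (P : Ideal R) [P.IsPrime] :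
    Function.Surjective (algebraMap R (Localization.AtPrime P)) ↔
      ∀ m : Ideal R, m.IsMaximal → RingHom.ker (algebraMap R (Localization.AtPrime P)) ≤ m →
        m ≤ P := by
  rw [IsLocalization.algebraMap_surjective_iff_forall_isMaximal (M := P.primeCompl)]
  exact forall₂_congr fun m _ => imp_congr_right fun _ => Set.disjoint_compl_left_iff_subset

end

theorem gelfand_iff_localization_at_maximal_surjective (A : Type*) [CommRing A] :
    (∀ p : Ideal A, p.IsPrime → ∃! m : Ideal A, m.IsMaximal ∧ p ≤ m) ↔
      ∀ (m : Ideal A) (hm : m.IsMaximal),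
        Function.Surjective
          (algebraMap A (Localization (@Ideal.primeCompl A _ m hm.isPrime))) := by
  refine ⟨fun h m hm => ?_, fun h p hp => ?_⟩
  · refine (Localization.AtPrime.algebraMap_surjective_iff m).2 fun m' hm' hker => ?_
    by_contra hm'm
    obtain ⟨a, ha, b, hb, hab⟩ := exists_mul_eq_zero_of_forall_isPrime_not_le m m'
      fun p hp hpm hpm' => hm'm ((h p hp).unique ⟨hm', hpm'⟩ ⟨hm, hpm⟩).le
    exact hb (hker ((IsLocalization.map_eq_zero_iff m.primeCompl _ b).2 ⟨⟨a, ha⟩, hab⟩))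
  · obtain ⟨m, hm, hpm⟩ := exists_le_maximal p hp.ne_top
    have hker := IsLocalization.ker_algebraMap_le (M := m.primeCompl) (Localization.AtPrime m)
      (Set.disjoint_compl_left_iff_subset.2 hpm)
    exact ⟨m, ⟨hm, hpm⟩, fun m' ⟨hm', hpm'⟩ => hm'.eq_of_le hm.ne_top
      ((Localization.AtPrime.algebraMap_surjective_iff m).1 (h m hm) m' hm' (hker.trans hpm'))⟩
end

section
/- A commutative ring A is a Gelfand ring if and only if for every f ∈ A there exist g, h ∈ A such that (1 + fg)(1 + (1−f)h) = 0. -/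
theorem gelfand_iff_contessa_identity (A : Type*) [CommRing A] :
    (∀ p : Ideal A, p.IsPrime → ∃! m : Ideal A, m.IsMaximal ∧ p ≤ m) ↔
      ∀ f : A, ∃ g h : A, (1 + f * g) * (1 + (1 - f) * h) = 0 := by
  constructor
  · intro hG f
    by_contra hcon
    push_neg at hcon
    -- the set of products (1+f g)(1+(1-f)h) is a submonoid
    set S : Submonoid A :=
      { carrier := {x | ∃ g h : A, x = (1 + f * g) * (1 + (1 - f) * h)}
        one_mem' := ⟨0, 0, by ring⟩
        mul_mem' := by
          rintro x y ⟨g₁, h₁, rfl⟩ ⟨g₂, h₂, rfl⟩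
          exact ⟨g₁ + g₂ + f * g₁ * g₂, h₁ + h₂ + (1 - f) * h₁ * h₂, by ring⟩ } with hS
    have h0 : Disjoint ((⊥ : Ideal A) : Set A) (S : Set A) := by
      rw [Set.disjoint_left]
      rintro x hx ⟨g, h, rfl⟩
      simp only [SetLike.mem_coe, Ideal.mem_bot] at hx
      exact hcon g h hx
    obtain ⟨p, hp, -, hdisj⟩ := Ideal.exists_le_prime_disjoint ⊥ S h0
    have key : ∀ a : A, (∀ c : A, 1 + a * c ∈ S) → p ⊔ Ideal.span {a} ≠ ⊤ := by
      intro a ha htop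
      rw [Ideal.eq_top_iff_one, Submodule.mem_sup] at htop
      obtain ⟨x, hx, y, hy, hxy⟩ := htop
      rw [Ideal.mem_span_singleton'] at hy
      obtain ⟨c, rfl⟩ := hy
      have : x = 1 + a * (-c) := by linear_combination hxy
      exact Set.disjoint_left.mp hdisj hx (this ▸ ha (-c))
    have hf : p ⊔ Ideal.span {f} ≠ ⊤ :=
      key f fun c => ⟨c, 0, by ring⟩
    have hf' : p ⊔ Ideal.span {1 - f} ≠ ⊤ :=
      key (1 - f) fun c => ⟨0, c, by ring⟩
    obtain ⟨m₁, hm₁, hle₁⟩ := Ideal.exists_le_maximal _ hf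
    obtain ⟨m₂, hm₂, hle₂⟩ := Ideal.exists_le_maximal _ hf'
    obtain ⟨m, -, hm⟩ := hG p hp
    have e₁ : m₁ = m := hm m₁ ⟨hm₁, le_trans le_sup_left hle₁⟩
    have e₂ : m₂ = m := hm m₂ ⟨hm₂, le_trans le_sup_left hle₂⟩
    have hfm : f ∈ m₁ := hle₁ (le_sup_right (α := Ideal A) (Ideal.subset_span rfl))
    have hfm' : (1 - f) ∈ m₂ := hle₂ (le_sup_right (α := Ideal A) (Ideal.subset_span rfl))
    rw [e₁] at hfm; rw [e₂] at hfm'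
    exact hm₁.ne_top (e₁ ▸ (Ideal.eq_top_iff_one m).mpr
      (by simpa using m.add_mem hfm hfm'))
  · intro hC p hp
    obtain ⟨m, hm, hpm⟩ := Ideal.exists_le_maximal p hp.ne_top
    refine ⟨m, ⟨hm, hpm⟩, ?_⟩
    rintro m' ⟨hm', hpm'⟩
    by_contra hne
    -- m' ⊔ m = ⊤ since they are distinct maximal ideals
    have htop : m' ⊔ m = ⊤ :=
      Ideal.IsMaximal.coprime_of_ne hm' hm hne
    rw [Ideal.eq_top_iff_one, Submodule.mem_sup] at htop
    obtain ⟨a, ha, b, hb, hab⟩ := htop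
    obtain ⟨g, h, hgh⟩ := hC a
    have hmem : (1 + a * g) * (1 + (1 - a) * h) ∈ p := hgh ▸ p.zero_mem
    rcases hp.mem_or_mem hmem with h1 | h2
    · have : (1 : A) ∈ m' := by
        have := m'.sub_mem (hpm' h1) (m'.mul_mem_right g ha)
        simpa using this
      exact hm'.ne_top ((Ideal.eq_top_iff_one m').mpr this)
    · have hbm : (1 : A) - a ∈ m := by
        have : (1 : A) - a = b := by linear_combination -hab
        rwa [this]
      have : (1 : A) ∈ m := by
        have := m.sub_mem (hpm h2) (m.mul_mem_right h hbm)
        simpa using this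
      exact hm.ne_top ((Ideal.eq_top_iff_one m).mpr this)
end

section
/- If A is a Gelfand ring with only finitely many maximal ideals, then A is canonically isomorphic to the product ∏_{𝔪 ∈ Max(A)} A_𝔪; in particular, A is a clean ring. -/
/-!
If `𝔪 ≠ 𝔫` are maximal ideals of a Gelfand ring, there are `a ∉ 𝔪`, `b ∉ 𝔫` with `a * b = 0`:
otherwise `0` avoids the multiplicative set `(A ∖ 𝔪)(A ∖ 𝔫)`, and a prime ideal avoiding it would
lie in both `𝔪` and `𝔫`. With finitely many maximal ideals, products of such elements, normalised
by a unit, give for each `𝔪` an element `e` that is `1` in `A_𝔪` and `0` in every other `A_𝔫`.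
Such an `e` makes `A → A_𝔪` surjective, as `t * e + (1 - e)` is a unit of `A` with the same image
as `t` in `A_𝔪`; hence `A → ∏ A_𝔪` is surjective, and it is injective for any ring.
Finally, a local ring is clean, and so is a product of clean rings.
-/

def IsGelfandRing (A : Type*) [CommSemiring A] : Prop :=
  ∀ p : Ideal A, p.IsPrime → ∃! m : Ideal A, m.IsMaximal ∧ p ≤ m

def IsCleanRing (R : Type*) [Ring R] : Prop :=
  ∀ a : R, ∃ e u : R, IsIdempotentElem e ∧ IsUnit u ∧ a = e + u

section Clean

variable {R S : Type*} [Ring R] [Ring S]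

theorem IsLocalRing.isCleanRing [IsLocalRing R] : IsCleanRing R := fun a ↦ by
  rcases IsLocalRing.isUnit_or_isUnit_of_isUnit_add (a := a) (b := 1 - a) (by simp) with ha | ha
  · exact ⟨0, a, .zero, ha, (zero_add a).symm⟩
  · exact ⟨1, a - 1, .one, by simpa using ha.neg, (add_sub_cancel 1 a).symm⟩

theorem IsCleanRing.pi {ι : Type*} {R : ι → Type*} [∀ i, Ring (R i)]
    (h : ∀ i, IsCleanRing (R i)) : IsCleanRing (∀ i, R i) := fun a ↦ by
  choose e u he hu hau using fun i ↦ h i (a i)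
  exact ⟨e, u, funext he, Pi.isUnit_iff.mpr hu, funext hau⟩

theorem IsCleanRing.of_ringEquiv (f : R ≃+* S) (h : IsCleanRing R) : IsCleanRing S := fun a ↦ by
  obtain ⟨e, u, he, hu, hau⟩ := h (f.symm a)
  exact ⟨f e, f u, he.map f, hu.map f, by rw [← map_add, ← hau, f.apply_symm_apply]⟩

end Clean

namespace IsGelfandRing

variable {A : Type*}

theorem exists_mul_eq_zero [CommSemiring A] (hA : IsGelfandRing A) {m n : Ideal A}
    [m.IsMaximal] [n.IsMaximal] (hmn : m ≠ n) : ∃ a ∉ m, ∃ b ∉ n, a * b = 0 := by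
  by_contra! h
  have hdisj : Disjoint ((⊥ : Ideal A) : Set A) (m.primeCompl ⊔ n.primeCompl : Submonoid A) := by
    refine Set.disjoint_left.mpr fun x hx hxS ↦ ?_
    obtain ⟨a, ha, b, hb, rfl⟩ := Submonoid.mem_sup.mp hxS
    exact h a ha b hb hx
  obtain ⟨p, hp, -, hpS⟩ := Ideal.exists_le_prime_disjoint _ _ hdisj
  have hpm : p ≤ m := fun x hx ↦ by_contra fun hxm ↦
    Set.disjoint_left.mp hpS hx (Submonoid.mem_sup_left hxm)
  have hpn : p ≤ n := fun x hx ↦ by_contra fun hxn ↦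
    Set.disjoint_left.mp hpS hx (Submonoid.mem_sup_right hxn)
  exact hmn <| (hA p hp).unique ⟨inferInstance, hpm⟩ ⟨inferInstance, hpn⟩

theorem exists_notMem_algebraMap_eq_zero [CommSemiring A] (hA : IsGelfandRing A) {m n : Ideal A}
    [m.IsMaximal] [n.IsMaximal] (hmn : m ≠ n) :
    ∃ a ∉ m, algebraMap A (Localization.AtPrime n) a = 0 := by
  obtain ⟨a, ha, b, hb, hab⟩ := hA.exists_mul_eq_zero hmn
  exact ⟨a, ha, (IsLocalization.map_eq_zero_iff n.primeCompl _ a).mpr ⟨⟨b, hb⟩, by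
    rw [mul_comm]; exact hab⟩⟩

end IsGelfandRing

namespace MaximalSpectrum

variable {A : Type*} [CommRing A]

theorem isUnit_of_forall_isUnit_algebraMap {a : A}
    (h : ∀ I : MaximalSpectrum A, IsUnit (algebraMap A (Localization.AtPrime I.asIdeal) a)) :
    IsUnit a := by
  by_contra ha
  obtain ⟨m, hm, ham⟩ := exists_max_ideal_of_mem_nonunits ha
  exact (IsLocalization.AtPrime.isUnit_to_map_iff _ m a).mp (h ⟨m, hm⟩) ham

theorem algebraMap_surjective_of_toPiLocalization_eq_single_one
    [DecidableEq (MaximalSpectrum A)] {I : MaximalSpectrum A} {e : A}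
    (he : toPiLocalization A e = Pi.single I 1) :
    Function.Surjective (algebraMap A (Localization.AtPrime I.asIdeal)) := by
  intro y
  obtain ⟨⟨r, t⟩, rfl⟩ := IsLocalization.mk'_surjective I.asIdeal.primeCompl y
  set u := t * e + (1 - e)
  have hu (J : MaximalSpectrum A) : algebraMap A (Localization.AtPrime J.asIdeal) u =
      if J = I then algebraMap A _ t else 1 := by
    have heJ := congr_fun he J
    rw [toPiLocalization_apply_apply] at heJ
    by_cases hJI : J = I
    · subst hJI
      simp [u, heJ]
    · simp [u, heJ, hJI]
  have hu_unit : IsUnit u := isUnit_of_forall_isUnit_algebraMap fun J ↦ by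
    rw [hu]
    split_ifs with hJI
    · subst hJI
      exact IsLocalization.map_units _ t
    · exact isUnit_one
  refine ⟨r * hu_unit.unit⁻¹, (IsLocalization.eq_mk'_iff_mul_eq).mpr ?_⟩
  have hut : algebraMap A (Localization.AtPrime I.asIdeal) t = algebraMap A _ u := by simp [hu]
  rw [hut, ← map_mul, mul_assoc, hu_unit.val_inv_mul, mul_one]

variable [Finite (MaximalSpectrum A)]

theorem toPiLocalization_surjective_of_forall_exists_eq_single_one
    [DecidableEq (MaximalSpectrum A)]
    (h : ∀ I : MaximalSpectrum A, ∃ e : A, toPiLocalization A e = Pi.single I 1) :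
    Function.Surjective (toPiLocalization A) := by
  have : Fintype (MaximalSpectrum A) := .ofFinite _
  choose e he using h
  intro x
  choose a ha using fun I ↦ algebraMap_surjective_of_toPiLocalization_eq_single_one (he I) (x I)
  refine ⟨∑ I, e I * a I, ?_⟩
  simp only [map_sum, map_mul, he, ← Pi.single_mul_left, one_mul, toPiLocalization_apply_apply,
    ha]
  exact Finset.univ_sum_single x

theorem exists_notMem_forall_ne_algebraMap_eq_zero (hA : IsGelfandRing A) (I : MaximalSpectrum A) :
    ∃ f ∉ I.asIdeal, ∀ J ≠ I, algebraMap A (Localization.AtPrime J.asIdeal) f = 0 := by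
  have : Fintype (MaximalSpectrum A) := .ofFinite _
  have hg (J : MaximalSpectrum A) :
      ∃ g ∉ I.asIdeal, J ≠ I → algebraMap A (Localization.AtPrime J.asIdeal) g = 0 := by
    by_cases hJI : J = I
    · exact ⟨1, I.asIdeal.primeCompl.one_mem, absurd hJI⟩
    · obtain ⟨g, hgI, hgJ⟩ := hA.exists_notMem_algebraMap_eq_zero
        (fun h ↦ hJI (MaximalSpectrum.ext h).symm)
      exact ⟨g, hgI, fun _ ↦ hgJ⟩
  choose g hgI hgJ using hg
  refine ⟨∏ J, g J, Submonoid.prod_mem I.asIdeal.primeCompl fun J _ ↦ hgI J, fun J hJI ↦ ?_⟩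
  rw [map_prod]
  exact Finset.prod_eq_zero (Finset.mem_univ J) (hgJ J hJI)

theorem exists_toPiLocalization_eq_single_one
    [DecidableEq (MaximalSpectrum A)] (hA : IsGelfandRing A) (I : MaximalSpectrum A) :
    ∃ e : A, toPiLocalization A e = Pi.single I 1 := by
  have : Fintype (MaximalSpectrum A) := .ofFinite _
  choose f hfI hfJ using exists_notMem_forall_ne_algebraMap_eq_zero hA
  have hsum (J : MaximalSpectrum A) :
      algebraMap A (Localization.AtPrime J.asIdeal) (∑ K, f K) = algebraMap A _ (f J) := by
    rw [map_sum]
    exact Finset.sum_eq_single J (fun K _ hKJ ↦ hfJ K J (Ne.symm hKJ)) (by simp)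
  have hf (J : MaximalSpectrum A) : IsUnit (algebraMap A (Localization.AtPrime J.asIdeal) (f J)) :=
    (IsLocalization.AtPrime.isUnit_to_map_iff _ J.asIdeal _).mpr (hfI J)
  have hs : IsUnit (∑ K, f K) := isUnit_of_forall_isUnit_algebraMap fun J ↦ hsum J ▸ hf J
  refine ⟨f I * hs.unit⁻¹, funext fun J ↦ ?_⟩
  rw [toPiLocalization_apply_apply, map_mul]
  by_cases hJI : J = I
  · subst hJI
    rw [← hsum, ← map_mul, hs.mul_val_inv, map_one, Pi.single_eq_same]
  · rw [hfJ I J hJI, zero_mul, Pi.single_eq_of_ne hJI]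

theorem toPiLocalization_bijective_of_isGelfandRing (hA : IsGelfandRing A) :
    Function.Bijective (toPiLocalization A) := by
  classical
  exact ⟨toPiLocalization_injective A, toPiLocalization_surjective_of_forall_exists_eq_single_one
    (exists_toPiLocalization_eq_single_one hA)⟩

end MaximalSpectrum

theorem gelfand_finitely_many_maximals_product_local (A : Type*) [CommRing A]
    (hG : ∀ p : Ideal A, p.IsPrime → ∃! m : Ideal A, m.IsMaximal ∧ p ≤ m)
    (hfin : Finite {m : Ideal A // m.IsMaximal}) :
    Function.Bijective
        (fun (a : A) (m : {m : Ideal A // m.IsMaximal}) =>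
          algebraMap A (Localization (@Ideal.primeCompl A _ m.1 m.2.isPrime)) a) ∧
      ∀ a : A, ∃ e u : A, IsIdempotentElem e ∧ IsUnit u ∧ a = e + u := by
  have : Finite (MaximalSpectrum A) := .of_equiv _ (MaximalSpectrum.equivSubtype A).symm
  have hbij := MaximalSpectrum.toPiLocalization_bijective_of_isGelfandRing hG
  refine ⟨(Equiv.piCongrLeft' _ (MaximalSpectrum.equivSubtype A)).bijective.comp hbij, ?_⟩
  exact (IsCleanRing.pi fun _ ↦ IsLocalRing.isCleanRing).of_ringEquiv
    (RingEquiv.ofBijective _ hbij).symm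
end

section
/- A commutative ring A is clean if and only if for any two distinct maximal ideals 𝔪, 𝔪′ of A there exists an idempotent e ∈ A with e ∈ 𝔪 and 1 − e ∈ 𝔪′. -/
/-!
If `1 = x + y` with `x ∈ 𝔪`, `y ∈ 𝔪'` and `x = e + u` is clean, then `1 - e` separates `𝔪`
from `𝔪'`, since every prime ideal contains `e` or `1 - e`.

Conversely, if `e` is idempotent with `e ∈ (a - 1)` and `1 - e ∈ (a)`, then
`a - e = e (a - 1) + (1 - e) a` is a unit. Such an `e` comes from two rounds of one compactness
argument: if no maximal ideal contains `b` together with all idempotents of an ideal `I`, then `b`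
and finitely many of these idempotents generate `A`, and those idempotents generate a principal
ideal `(e)` with `e` idempotent, so `e ∈ I` and `1 - e ∈ (b)`. Separation of maximal ideals feeds
this first with `I = 𝔭 ∋ a`, `b = a - 1`, then with `I = (a - 1)`, `b = a`.
-/

section

variable {A : Type*} [CommRing A]

namespace Ideal

lemma one_sub_notMem_of_mem {I : Ideal A} (hI : I ≠ ⊤) {x : A} (hx : x ∈ I) : 1 - x ∉ I :=
  fun h => hI <| (eq_top_iff_one I).2 <| by simpa using I.add_mem hx h

lemma IsPrime.one_sub_mem_of_isIdempotentElem {p : Ideal A} (hp : p.IsPrime) {e : A}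
    (he : IsIdempotentElem e) (hep : e ∉ p) : 1 - e ∈ p :=
  (hp.mem_or_mem (he.mul_one_sub_self ▸ p.zero_mem)).resolve_left hep

lemma isIdempotentElem_span_of_forall_isIdempotentElem {s : Set A}
    (hs : ∀ x ∈ s, IsIdempotentElem x) : IsIdempotentElem (span s) := by
  refine le_antisymm mul_le_right ?_
  rw [span_le]
  intro x hx
  rw [← (hs x hx).eq]
  exact mul_mem_mul (subset_span hx) (subset_span hx)

lemma exists_isIdempotentElem_span_eq_of_finite {s : Set A} (hfin : s.Finite)
    (hs : ∀ x ∈ s, IsIdempotentElem x) : ∃ e, IsIdempotentElem e ∧ span s = span {e} :=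
  (isIdempotentElem_iff_of_fg _ ⟨hfin.toFinset, by simp⟩).1
    (isIdempotentElem_span_of_forall_isIdempotentElem hs)

end Ideal

open Ideal

lemma exists_isIdempotentElem_mem_and_one_sub_mem_span_singleton {I : Ideal A} {b : A}
    (h : ∀ m : Ideal A, m.IsMaximal → b ∈ m → ∃ e, IsIdempotentElem e ∧ e ∈ I ∧ e ∉ m) :
    ∃ e, IsIdempotentElem e ∧ e ∈ I ∧ 1 - e ∈ span {b} := by
  set S : Set A := {e | IsIdempotentElem e ∧ e ∈ I}
  have htop : span {b} ⊔ span S = ⊤ := by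
    by_contra hne
    obtain ⟨m, hm, hle⟩ := exists_le_maximal _ hne
    obtain ⟨e, he, heI, hem⟩ := h m hm (hle (mem_sup_left (mem_span_singleton_self b)))
    exact hem (hle (mem_sup_right (subset_span ⟨he, heI⟩)))
  obtain ⟨y, hy, z, hz, hyz⟩ := Submodule.mem_sup.1 ((eq_top_iff_one _).1 htop)
  obtain ⟨T, hTS, hzT⟩ := Submodule.mem_span_finite_of_mem_span hz
  obtain ⟨e, he, hTe⟩ :=
    exists_isIdempotentElem_span_eq_of_finite T.finite_toSet fun x hx => (hTS hx).1
  have heI : e ∈ I := by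
    have hTI : span T ≤ I := span_le.2 fun x hx => (hTS hx).2
    exact hTI (hTe ▸ mem_span_singleton_self e)
  obtain ⟨c, rfl⟩ := mem_span_singleton'.1 (by rw [← hTe]; exact hzT)
  have hyz' : 1 - e = (1 - e) * y := by
    linear_combination (1 - e) * hyz.symm + c * he.mul_one_sub_self
  exact ⟨e, he, heI, hyz' ▸ mul_mem_left _ _ hy⟩

lemma exists_isIdempotentElem_mem_maximal_and_one_sub_mem_span_sub_one
    (hsep : ∀ m m' : Ideal A, m.IsMaximal → m'.IsMaximal → m ≠ m' →
      ∃ e : A, IsIdempotentElem e ∧ e ∈ m ∧ 1 - e ∈ m')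
    {p : Ideal A} (hp : p.IsMaximal) {a : A} (hap : a ∈ p) :
    ∃ e, IsIdempotentElem e ∧ e ∈ p ∧ 1 - e ∈ span {a - 1} := by
  refine exists_isIdempotentElem_mem_and_one_sub_mem_span_singleton fun m hm ham => ?_
  have hpm : p ≠ m := by
    rintro rfl
    exact one_sub_notMem_of_mem hp.ne_top hap (by simpa using p.neg_mem ham)
  obtain ⟨e, he, hep, hem⟩ := hsep p m hp hm hpm
  exact ⟨e, he, hep, fun hem' => one_sub_notMem_of_mem hm.ne_top hem' hem⟩

lemma exists_isIdempotentElem_mem_span_sub_one_and_one_sub_mem_span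
    (hsep : ∀ m m' : Ideal A, m.IsMaximal → m'.IsMaximal → m ≠ m' →
      ∃ e : A, IsIdempotentElem e ∧ e ∈ m ∧ 1 - e ∈ m') (a : A) :
    ∃ e, IsIdempotentElem e ∧ e ∈ span {a - 1} ∧ 1 - e ∈ span {a} := by
  refine exists_isIdempotentElem_mem_and_one_sub_mem_span_singleton fun p hp hap => ?_
  obtain ⟨e, he, hep, hea⟩ :=
    exists_isIdempotentElem_mem_maximal_and_one_sub_mem_span_sub_one hsep hp hap
  exact ⟨1 - e, he.one_sub, hea, one_sub_notMem_of_mem hp.ne_top hep⟩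

lemma isUnit_sub_of_isIdempotentElem {a e : A} (he : IsIdempotentElem e)
    (hea : e ∈ span {a - 1}) (hea' : 1 - e ∈ span {a}) : IsUnit (a - e) := by
  obtain ⟨s, hs⟩ := mem_span_singleton'.1 hea
  obtain ⟨t, ht⟩ := mem_span_singleton'.1 hea'
  refine IsUnit.of_mul_eq_one (e * s + (1 - e) * t) ?_
  linear_combination e * hs + (1 - e) * ht + (t - s + 2) * he.eq

lemma exists_isIdempotentElem_separating_of_clean
    (hclean : ∀ a : A, ∃ e u : A, IsIdempotentElem e ∧ IsUnit u ∧ a = e + u)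
    {m m' : Ideal A} (hm : m.IsMaximal) (hm' : m'.IsMaximal) (hne : m ≠ m') :
    ∃ e : A, IsIdempotentElem e ∧ e ∈ m ∧ 1 - e ∈ m' := by
  obtain ⟨x, hx, y, hy, hxy⟩ :=
    Submodule.mem_sup.1 ((eq_top_iff_one _).1 (hm.coprime_of_ne hm' hne))
  obtain ⟨e, u, he, hu, rfl⟩ := hclean x
  have hum : u ∉ m := fun h => hm.ne_top (eq_top_of_isUnit_mem m h hu)
  have hum' : u ∉ m' := fun h => hm'.ne_top (eq_top_of_isUnit_mem m' h hu)
  have hem : e ∉ m := fun h => hum (by simpa using m.sub_mem hx h)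
  have hem' : 1 - e ∉ m' := fun h => hum' <| by
    have hu' : u = (1 - e) - y := by linear_combination hxy
    exact hu' ▸ m'.sub_mem h hy
  refine ⟨1 - e, he.one_sub, hm.isPrime.one_sub_mem_of_isIdempotentElem he hem, ?_⟩
  simpa using (hm'.isPrime.one_sub_mem_of_isIdempotentElem he.one_sub hem')

end

theorem clean_iff_idempotent_separating_maximals (A : Type*) [CommRing A] :
    (∀ a : A, ∃ e u : A, IsIdempotentElem e ∧ IsUnit u ∧ a = e + u) ↔
      ∀ m m' : Ideal A, m.IsMaximal → m'.IsMaximal → m ≠ m' →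
        ∃ e : A, IsIdempotentElem e ∧ e ∈ m ∧ 1 - e ∈ m' := by
  refine ⟨fun hclean m m' hm hm' hne =>
    exists_isIdempotentElem_separating_of_clean hclean hm hm' hne, fun hsep a => ?_⟩
  obtain ⟨e, he, hea, hea'⟩ :=
    exists_isIdempotentElem_mem_span_sub_one_and_one_sub_mem_span hsep a
  exact ⟨e, a - e, he, isUnit_sub_of_isIdempotentElem he hea hea', by ring⟩
end

section
/- If the quotient A/𝔑 of a commutative ring A by its nilradical 𝔑 is a clean ring, then A is a clean ring. -/
theorem clean_of_quotient_nilradical_clean (A : Type*) [CommRing A]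
    (h : ∀ a : A ⧸ nilradical A, ∃ e u : A ⧸ nilradical A,
      IsIdempotentElem e ∧ IsUnit u ∧ a = e + u) :
    ∀ a : A, ∃ e u : A, IsIdempotentElem e ∧ IsUnit u ∧ a = e + u := by
  intro a
  set f := Ideal.Quotient.mk (nilradical A)
  have hker : ∀ x ∈ RingHom.ker f, IsNilpotent x := by
    intro x hx
    rwa [RingHom.mem_ker, Ideal.Quotient.eq_zero_iff_mem, mem_nilradical] at hx
  obtain ⟨e, u, he, hu, hau⟩ := h (f a)
  obtain ⟨e', he', hfe⟩ := exists_isIdempotentElem_eq_of_ker_isNilpotent f hker e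
    (Ideal.Quotient.mk_surjective e) he
  refine ⟨e', a - e', he', ?_, by ring⟩
  -- a - e' maps to u, which is a unit
  obtain ⟨w, hw⟩ := hu
  obtain ⟨v, hv⟩ := Ideal.Quotient.mk_surjective (I := nilradical A) (↑w⁻¹)
  have h1 : IsNilpotent ((a - e') * v - 1) := by
    apply hker
    rw [RingHom.mem_ker, map_sub, map_mul, map_sub, hfe, hv, map_one]
    rw [show f a - e = u by rw [hau]; ring, ← hw, Units.mul_inv, sub_self]
  have h2 : IsUnit ((a - e') * v) := by
    have := h1.isUnit_add_right_of_commute isUnit_one (Commute.all _ _)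
    simpa using this
  exact isUnit_of_mul_isUnit_left h2
end

section
/- Every commutative ring of Krull dimension zero is a clean ring. -/
/-!
An element `a` of a zero-dimensional ring is strongly π-regular: `a ^ n = a ^ (n + 1) * x` for
some `n` and `x`. Otherwise the elements `a ^ n * (1 - a * x)` form a multiplicative set avoiding
`0`, hence avoided by some prime `p`; as `a ∉ p` and `p` is maximal, `a` is invertible modulo `p`,
so some `1 - a * y` lies in `p`, a contradiction.

For such `a`, `e = (a * x) ^ n` is an idempotent with `a * x * e = e` and `a * (1 - e)` nilpotent:
`a` is invertible on `e R` and nilpotent on `(1 - e) R`. Hence `a - (1 - e)`, which is `a` on `e R`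
and `-1` plus a nilpotent on `(1 - e) R`, is a unit, and `a = (1 - e) + (a - (1 - e))`.
-/

section Monoid

variable {M : Type*} [Monoid M]

theorem mul_pow_eq_self_of_mul_eq_self {c b : M} (h : c * b = c) (k : ℕ) : c * b ^ k = c := by
  induction k with
  | zero => rw [pow_zero, mul_one]
  | succ k ih => rw [pow_succ, ← mul_assoc, ih, h]

theorem IsIdempotentElem.pow_of_pow_succ_eq {b : M} {n : ℕ} (h : b ^ (n + 1) = b ^ n) :
    IsIdempotentElem (b ^ n) :=
  mul_pow_eq_self_of_mul_eq_self (pow_succ b n ▸ h) n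

end Monoid

section CommRing

variable {R : Type*} [CommRing R]

theorem Ring.KrullDimLE.exists_pow_eq_pow_succ_mul [Ring.KrullDimLE 0 R] (a : R) :
    ∃ n x, a ^ n = a ^ (n + 1) * x := by
  by_contra! hne
  let S : Submonoid R :=
    { carrier := {s | ∃ n x, s = a ^ n * (1 - a * x)}
      mul_mem' := by
        rintro _ _ ⟨n, x, rfl⟩ ⟨m, y, rfl⟩
        exact ⟨n + m, x + y - a * x * y, by ring⟩
      one_mem' := ⟨0, 0, by ring⟩ }
  have hS : Disjoint ((⊥ : Ideal R) : Set R) S := by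
    rw [Set.disjoint_left]
    rintro _ hzero ⟨n, x, rfl⟩
    exact hne n x (by linear_combination Ideal.mem_bot.mp hzero)
  obtain ⟨p, hp, -, hpS⟩ := Ideal.exists_le_prime_disjoint ⊥ S hS
  have ha : a ∉ p := fun ha => Set.disjoint_left.mp hpS ha ⟨1, 0, by ring⟩
  obtain ⟨y, i, hi, hyi⟩ := hp.isMaximal'.exists_inv ha
  have h1 : 1 - a * y ∈ p := by
    rwa [show 1 - a * y = i by linear_combination -hyi]
  exact Set.disjoint_left.mp hpS h1 ⟨0, y, by ring⟩

theorem IsIdempotentElem.isUnit_sub_one_sub {a e x : R} (he : IsIdempotentElem e)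
    (hinv : a * x * e = e) (hnil : IsNilpotent (a * (1 - e))) : IsUnit (a - (1 - e)) := by
  have hcorner : IsUnit (a * e - (1 - e)) :=
    .of_mul_eq_one (x * e - (1 - e)) (by linear_combination hinv + (a * x + a + x + 1) * he.eq)
  rw [show a - (1 - e) = a * e - (1 - e) + a * (1 - e) by ring]
  exact hnil.isUnit_add_left_of_commute hcorner (Commute.all _ _)

theorem exists_isIdempotentElem_isUnit_of_pow_eq_pow_succ_mul {a x : R} {n : ℕ}
    (h : a ^ n = a ^ (n + 1) * x) : ∃ e u, IsIdempotentElem e ∧ IsUnit u ∧ a = e + u := by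
  have hax : a ^ n * (a * x) = a ^ n := by linear_combination -h
  have hpow : (a * x) ^ (n + 1) = (a * x) ^ n := by
    rw [mul_pow, mul_pow, ← hax]; ring
  have he := IsIdempotentElem.pow_of_pow_succ_eq hpow
  have hkill : a ^ n * (1 - (a * x) ^ n) = 0 := by
    rw [mul_sub, mul_one, mul_pow_eq_self_of_mul_eq_self hax, sub_self]
  have hnil : IsNilpotent (a * (1 - (a * x) ^ n)) :=
    ⟨n + 1, by rw [mul_pow]; linear_combination (a * (1 - (a * x) ^ n) ^ n) * hkill⟩
  refine ⟨1 - (a * x) ^ n, a - (1 - (a * x) ^ n), he.one_sub, ?_, by ring⟩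
  exact he.isUnit_sub_one_sub (by rw [← pow_succ']; exact hpow) hnil

end CommRing

theorem zero_dimensional_is_clean (A : Type*) [CommRing A]
    (h : ∀ p : Ideal A, p.IsPrime → p.IsMaximal) :
    ∀ a : A, ∃ e u : A, IsIdempotentElem e ∧ IsUnit u ∧ a = e + u := by
  have := Ring.KrullDimLE.mk₀ h
  intro a
  obtain ⟨n, x, hx⟩ := Ring.KrullDimLE.exists_pow_eq_pow_succ_mul a
  exact exists_isIdempotentElem_isUnit_of_pow_eq_pow_succ_mul hx
end

section
/- A commutative ring A is a reduced mp-ring (every prime ideal contains a unique minimal prime and A has no nonzero nilpotents) if and only if for all f, g ∈ A with fg = 0 one has Ann(f) + Ann(g) = A. -/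
private lemma key_mp {A : Type*} [CommRing A] [IsReduced A] (p : Ideal A) (hp : p.IsPrime)
    (a : A) (h : ∀ q ∈ minimalPrimes A, q ≤ p → a ∈ q) :
    ∃ s ∉ p, s * a = 0 := by
  have h0 : (0 : A) ∈ (p.primeCompl ⊔ Submonoid.powers a : Submonoid A) := by
    by_contra h0
    have hdisj : Disjoint ((⊥ : Ideal A) : Set A)
        ((p.primeCompl ⊔ Submonoid.powers a : Submonoid A) : Set A) := by
      rw [Set.disjoint_left]
      rintro x hx hxS
      simp only [SetLike.mem_coe, Ideal.mem_bot] at hx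
      exact h0 (hx ▸ hxS)
    obtain ⟨P, hP, -, hPd⟩ := Ideal.exists_le_prime_disjoint ⊥ _ hdisj
    haveI := hP
    obtain ⟨q, hq, hqP⟩ := Ideal.exists_minimalPrimes_le (bot_le : (⊥ : Ideal A) ≤ P)
    have hPp : P ≤ p := fun x hx => by
      by_contra hxp
      exact Set.disjoint_left.mp hPd hx (Submonoid.mem_sup_left hxp)
    have haP : a ∈ P := hqP (h q hq (hqP.trans hPp))
    exact Set.disjoint_left.mp hPd haP (Submonoid.mem_sup_right ⟨1, pow_one a⟩)
  obtain ⟨s, hs, t, ⟨n, rfl⟩, hst⟩ := Submonoid.mem_sup.mp h0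
  refine ⟨s, hs, ?_⟩
  have hnil : (s * a) ^ (n + 1) = 0 := by
    have : (s * a) ^ (n + 1) = s ^ n * a * (s * a ^ n) := by ring
    rw [this, hst, mul_zero]
  exact (IsReduced.eq_zero _ ⟨n + 1, hnil⟩)

theorem reduced_mp_iff_annihilators_comaximal (A : Type*) [CommRing A] :
    (IsReduced A ∧
        ∀ p : Ideal A, p.IsPrime → ∃! q : Ideal A, q ∈ minimalPrimes A ∧ q ≤ p) ↔
      ∀ f g : A, f * g = 0 →
        (Ideal.span {f} : Submodule A A).annihilator +
            (Ideal.span {g} : Submodule A A).annihilator = ⊤ := by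
  constructor
  · rintro ⟨hred, hmp⟩ f g hfg
    by_contra hne
    obtain ⟨m, hm, hle⟩ := Ideal.exists_le_maximal _ hne
    haveI hmP := hm.isPrime
    obtain ⟨q, ⟨hq, hqm⟩, huniq⟩ := hmp m hm.isPrime
    have hzq : f * g ∈ q := by rw [hfg]; exact q.zero_mem
    have hkey : ∀ x : A, x ∈ q →
        (Ideal.span {x} : Submodule A A).annihilator ≤ m → False := by
      intro x hxq hxm
      obtain ⟨s, hsm, hsx⟩ := key_mp m hm.isPrime x (fun q' hq' hq'm => by
        rw [huniq q' ⟨hq', hq'm⟩]; exact hxq)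
      exact hsm (hxm ((Submodule.mem_annihilator_span_singleton _ _).mpr
        (by rw [smul_eq_mul]; exact hsx)))
    rcases hq.1.1.mem_or_mem hzq with hfq | hgq
    · exact hkey f hfq (le_trans le_sup_left (by rwa [← Submodule.add_eq_sup]))
    · exact hkey g hgq (le_trans le_sup_right (by rwa [← Submodule.add_eq_sup]))
  · intro h
    have hsq : ∀ x : A, x * x = 0 → x = 0 := by
      intro x hx
      have htop := h x x hx
      rw [Submodule.add_eq_sup, sup_idem] at htop
      have h1 : (1 : A) ∈ (Ideal.span {x} : Submodule A A).annihilator := by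
        rw [htop]; trivial
      simpa using (Submodule.mem_annihilator_span_singleton _ _).mp h1
    have hpow : ∀ n : ℕ, ∀ x : A, x ^ n = 0 → x = 0 := by
      intro n
      induction n using Nat.strong_induction_on with
      | _ n ih =>
        intro x hx
        match n, hx with
        | 0, hx =>
          have h1 : (1 : A) = 0 := by simpa using hx
          calc x = x * 1 := (mul_one x).symm
            _ = 0 := by rw [h1, mul_zero]
        | 1, hx => simpa using hx
        | (n + 2), hx =>
          have hsq' : x ^ (n + 1) * x ^ (n + 1) = 0 := by
            have : x ^ (n + 1) * x ^ (n + 1) = x ^ (n + 2) * x ^ n := by ring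
            rw [this, hx, zero_mul]
          exact ih (n + 1) (by omega) x (hsq _ hsq')
    haveI hred : IsReduced A := ⟨fun x ⟨n, hn⟩ => hpow n x hn⟩
    refine ⟨hred, fun p hp => ?_⟩
    haveI := hp
    obtain ⟨q, hq, hqp⟩ := Ideal.exists_minimalPrimes_le (bot_le : (⊥ : Ideal A) ≤ p)
    refine ⟨q, ⟨hq, hqp⟩, ?_⟩
    rintro r ⟨hr, hrp⟩
    by_contra hne
    have hnle : ¬r ≤ q := fun hle => hne (le_antisymm hle (hq.2 ⟨hr.1.1, bot_le⟩ hle))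
    obtain ⟨f, hfr, hfq⟩ := SetLike.not_le_iff_exists.mp hnle
    obtain ⟨s, hsr, hsf⟩ := key_mp r hr.1.1 f (fun q' hq' hq'r => by
      have : q' = r := le_antisymm hq'r (hr.2 ⟨hq'.1.1, bot_le⟩ hq'r)
      rw [this]; exact hfr)
    have htop := h f s (by rw [mul_comm]; exact hsf)
    have h1 : (Ideal.span {f} : Submodule A A).annihilator ≤ q := fun a ha => by
      have haf : a * f = 0 := by
        simpa using (Submodule.mem_annihilator_span_singleton _ _).mp ha
      exact (hq.1.1.mem_or_mem (show a * f ∈ q by rw [haf]; exact q.zero_mem)).resolve_right hfq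
    have h2 : (Ideal.span {s} : Submodule A A).annihilator ≤ r := fun a ha => by
      have has : a * s = 0 := by
        simpa using (Submodule.mem_annihilator_span_singleton _ _).mp ha
      exact (hr.1.1.mem_or_mem (show a * s ∈ r by rw [has]; exact r.zero_mem)).resolve_right hsr
    rw [Submodule.add_eq_sup] at htop
    exact hp.ne_top (top_le_iff.mp (htop ▸ sup_le (h1.trans hqp) (h2.trans hrp)))
end

section
/- A commutative ring A is a reduced mp-ring if and only if for every maximal ideal 𝔪 of A the localization A_𝔪 is an integral domain. -/
theorem reduced_mp_iff_localizations_domain (A : Type*) [CommRing A] :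
    (IsReduced A ∧
        ∀ p : Ideal A, p.IsPrime → ∃! q : Ideal A, q ∈ minimalPrimes A ∧ q ≤ p) ↔
      ∀ (m : Ideal A) (hm : m.IsMaximal),
        IsDomain (Localization (@Ideal.primeCompl A _ m hm.isPrime)) := by
  constructor
  · rintro ⟨hred, hmp⟩ m hm
    haveI : m.IsPrime := hm.isPrime
    set S := Localization m.primeCompl
    haveI : IsReduced S :=
      isReduced_localizationPreserves m.primeCompl S hred
    obtain ⟨q, ⟨hqmin, hqle⟩, huniq⟩ := hmp m hm.isPrime
    have hdisj : Disjoint (m.primeCompl : Set A) (q : Set A) := by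
      rw [Set.disjoint_iff]
      rintro x ⟨hx1, hx2⟩
      exact hx1 (hqle hx2)
    have hmapprime : (Ideal.map (algebraMap A S) q).IsPrime :=
      IsLocalization.isPrime_of_isPrime_disjoint m.primeCompl S q hqmin.1.1 hdisj
    -- every prime of S contains map q
    have hle : ∀ P : Ideal S, P.IsPrime → Ideal.map (algebraMap A S) q ≤ P := by
      intro P hP
      haveI := hP
      have hcomap : (P.comap (algebraMap A S)).IsPrime := Ideal.IsPrime.comap _
      have hcm : P.comap (algebraMap A S) ≤ m := by
        intro x hx
        by_contra hxm
        exact hP.ne_top (Ideal.eq_top_of_isUnit_mem _ hx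
          ((IsLocalization.AtPrime.isUnit_to_map_iff S m x).2 hxm))
      obtain ⟨q0, hq0, hq0le⟩ := Ideal.exists_minimalPrimes_le
        (I := (⊥ : Ideal A)) (J := P.comap (algebraMap A S)) bot_le
      have : q0 = q := huniq q0 ⟨hq0, hq0le.trans hcm⟩
      calc Ideal.map (algebraMap A S) q = Ideal.map (algebraMap A S) q0 := by rw [this]
        _ ≤ Ideal.map (algebraMap A S) (P.comap (algebraMap A S)) := Ideal.map_mono hq0le
        _ ≤ P := Ideal.map_comap_le
    have hbot : Ideal.map (algebraMap A S) q = ⊥ := by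
      have h1 : Ideal.map (algebraMap A S) q ≤ nilradical S := by
        rw [nilradical_eq_sInf]
        exact le_sInf fun J hJ => hle J hJ
      rw [nilradical_eq_zero] at h1
      exact le_bot_iff.mp h1
    rw [hbot] at hmapprime
    haveI : Nontrivial S := Nontrivial.mk (by
      refine ⟨0, 1, fun h => ?_⟩
      exact hmapprime.ne_top (Ideal.eq_top_iff_one _ |>.2 (h ▸ Ideal.zero_mem _)))
    haveI : NoZeroDivisors S := ⟨fun {a b} hab =>
      (hmapprime.mem_or_mem (by simpa using hab)).imp
        (fun h => by simpa using h) (fun h => by simpa using h)⟩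
    exact NoZeroDivisors.to_isDomain S
  · intro h
    constructor
    · exact isReduced_ofLocalizationMaximal A fun J hJ => by haveI := h J hJ; infer_instance
    · intro p hp
      haveI := hp
      obtain ⟨m, hm, hpm⟩ := p.exists_le_maximal hp.ne_top
      haveI := hm.isPrime
      haveI := h m hm
      set S := Localization m.primeCompl
      -- Every minimal prime contained in m equals comap ⊥
      have key : ∀ q : Ideal A, q ∈ minimalPrimes A → q ≤ m →
          q = (⊥ : Ideal S).comap (algebraMap A S) := by
        intro q hq hqm
        have hcprime : ((⊥ : Ideal S).comap (algebraMap A S)).IsPrime :=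
          Ideal.IsPrime.comap _ (hK := Ideal.bot_prime)
        have hcle : (⊥ : Ideal S).comap (algebraMap A S) ≤ q := by
          intro x hx
          rw [Ideal.mem_comap, Ideal.mem_bot] at hx
          obtain ⟨s, hs⟩ := (IsLocalization.map_eq_zero_iff m.primeCompl S x).mp hx
          have hsq : (s : A) ∉ q := fun hsq => s.2 (hqm hsq)
          rcases hq.1.1.mem_or_mem (show (s : A) * x ∈ q from hs ▸ Ideal.zero_mem q) with h | h
          · exact absurd h hsq
          · exact h
        exact le_antisymm (hq.2 ⟨hcprime, bot_le⟩ hcle) hcle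
      obtain ⟨q, hq, hqp⟩ := Ideal.exists_minimalPrimes_le (I := (⊥ : Ideal A)) (J := p) bot_le
      refine ⟨q, ⟨hq, hqp⟩, ?_⟩
      rintro q' ⟨hq', hq'p⟩
      rw [key q' hq' (hq'p.trans hpm), key q hq (hqp.trans hpm)]
end

section
/- A commutative ring A is a reduced purified ring if and only if whenever fg = 0 for f, g ∈ A, there exists an idempotent e ∈ A such that f = fe and g = g(1 − e). -/
/-!
In a reduced purified ring every element `x` of a minimal prime `p` satisfies `x = x * ε` for some
idempotent `ε ∈ p`: by purity a prime containing the idempotents of `p` contains no minimal prime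
other than `p`, so `x` is nilpotent modulo the ideal they generate, and reducedness removes the
power. If `f * g = 0`, every maximal ideal contains a minimal prime containing `f` or `g`, hence
the idempotents killing `f` and those killing `g` generate the unit ideal; two of them, `u` and
`v`, already satisfy `(1 - u) * (1 - v) = 0`, and `e = 1 - u` works.

Conversely, `x * x = 0` gives `x = x * e = x * (1 - e)`, so `x = 0`. For distinct minimal primes
`p`, `q` there are `a ∉ p`, `b ∉ q` with `a * b = 0`, since otherwise a prime avoiding
`(A ∖ p)(A ∖ q)` would lie below both; the idempotent separating `b` from `a` lies in `p` and its
complement in `q`.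
-/

def IsPurified (A : Type*) [CommRing A] : Prop :=
  ∀ p q : Ideal A, p ∈ minimalPrimes A → q ∈ minimalPrimes A → p ≠ q →
    ∃ e : A, IsIdempotentElem e ∧ e ∈ p ∧ 1 - e ∈ q

section

variable {A : Type*} [CommRing A]

/-- The idempotents of `I` are directed under `e ⊔ d = e + d - e * d`. -/
theorem Ideal.exists_isIdempotentElem_mem_mul_eq_self_of_mem_span {I : Ideal A} {x : A}
    (hx : x ∈ Ideal.span {e | IsIdempotentElem e ∧ e ∈ I}) :
    ∃ ε, IsIdempotentElem ε ∧ ε ∈ I ∧ x * ε = x := by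
  induction hx using Submodule.span_induction with
  | mem e he => exact ⟨e, he.1, he.2, he.1.eq⟩
  | zero => exact ⟨0, .zero, I.zero_mem, zero_mul 0⟩
  | add x y _ _ hx hy =>
    obtain ⟨ε, hε, hεI, hxε⟩ := hx
    obtain ⟨δ, hδ, hδI, hyδ⟩ := hy
    refine ⟨ε + δ - ε * δ, hε.add_sub_mul hδ,
      I.sub_mem (I.add_mem hεI hδI) (I.mul_mem_right δ hεI), ?_⟩
    linear_combination (1 - δ) * hxε + (1 - ε) * hyδ
  | smul a x _ hx =>
    obtain ⟨ε, hε, hεI, hxε⟩ := hx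
    exact ⟨ε, hε, hεI, by rw [smul_eq_mul, mul_assoc, hxε]⟩

theorem IsPurified.le_radical_span_isIdempotentElem (hA : IsPurified A) {p : Ideal A}
    (hp : p ∈ minimalPrimes A) :
    p ≤ (Ideal.span {e | IsIdempotentElem e ∧ e ∈ p}).radical := by
  rw [Ideal.radical_eq_sInf]
  refine le_sInf fun r ⟨hr, hr_prime⟩ => ?_
  obtain ⟨q, hq, hqr⟩ := Ideal.exists_minimalPrimes_le (bot_le : ⊥ ≤ r)
  by_cases hpq : p = q
  · exact hpq ▸ hqr
  obtain ⟨e, he, hep, heq⟩ := hA p q hp hq hpq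
  have her : e ∈ r := hr (Ideal.subset_span ⟨he, hep⟩)
  exact absurd ((r.eq_top_iff_one).2 (by simpa using r.add_mem her (hqr heq))) hr_prime.ne_top

theorem IsPurified.exists_isIdempotentElem_mem_mul_eq_self [IsReduced A] (hA : IsPurified A)
    {p : Ideal A} (hp : p ∈ minimalPrimes A) {x : A} (hx : x ∈ p) :
    ∃ ε, IsIdempotentElem ε ∧ ε ∈ p ∧ x * ε = x := by
  obtain ⟨n, hxn⟩ := hA.le_radical_span_isIdempotentElem hp hx
  obtain ⟨ε, hε, hεp, hxnε⟩ := Ideal.exists_isIdempotentElem_mem_mul_eq_self_of_mem_span hxn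
  have hnil : IsNilpotent (x * (1 - ε)) := ⟨n + 1, by
    rw [mul_pow, hε.one_sub.pow_succ_eq, pow_succ']
    linear_combination (-x) * hxnε⟩
  exact ⟨ε, hε, hεp, by linear_combination -(IsReduced.eq_zero _ hnil)⟩

theorem exists_mul_eq_zero_of_mem_minimalPrimes {p q : Ideal A} (hp : p ∈ minimalPrimes A)
    (hq : q ∈ minimalPrimes A) (hpq : p ≠ q) : ∃ a ∉ p, ∃ b ∉ q, a * b = 0 := by
  have := hp.1.1
  have := hq.1.1
  by_contra! h
  have hS : Disjoint ((⊥ : Ideal A) : Set A) (p.primeCompl ⊔ q.primeCompl : Submonoid A) := by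
    refine Set.disjoint_left.2 fun x (hx : x = 0) hxS => ?_
    obtain ⟨a, ha, b, hb, rfl⟩ := Submonoid.mem_sup.1 hxS
    exact h a ha b hb hx
  obtain ⟨P, hP, -, hPS⟩ := Ideal.exists_le_prime_disjoint ⊥ _ hS
  have hPp : P ≤ p := fun x hxP => by_contra fun hxp =>
    Set.disjoint_left.1 hPS hxP (Submonoid.mem_sup_left hxp)
  have hPq : P ≤ q := fun x hxP => by_contra fun hxq =>
    Set.disjoint_left.1 hPS hxP (Submonoid.mem_sup_right hxq)
  have hpP : p = P := le_antisymm (hp.2 ⟨hP, bot_le⟩ hPp) hPp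
  have hqP : q = P := le_antisymm (hq.2 ⟨hP, bot_le⟩ hPq) hPq
  exact hpq (hpP.trans hqP.symm)

theorem IsPurified.exists_isIdempotentElem_of_mul_eq_zero [IsReduced A] (hA : IsPurified A)
    {f g : A} (hfg : f * g = 0) : ∃ e, IsIdempotentElem e ∧ f = f * e ∧ g = g * (1 - e) := by
  let J (x : A) : Ideal A := Ideal.span {e | IsIdempotentElem e ∧ e ∈ (A ∙ x).annihilator}
  have hJ : J f ⊔ J g = ⊤ := by
    by_contra hJ
    obtain ⟨P, hP, hJP⟩ := Ideal.exists_le_maximal _ hJ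
    obtain ⟨p, hp, hpP⟩ := Ideal.exists_minimalPrimes_le (bot_le : ⊥ ≤ P)
    have hJ_not_le {x : A} (hx : x ∈ p) : ¬J x ≤ P := fun hxP => by
      obtain ⟨ε, hε, hεp, hxε⟩ := hA.exists_isIdempotentElem_mem_mul_eq_self hp hx
      have hJx : 1 - ε ∈ J x := Ideal.subset_span ⟨hε.one_sub, by
        rw [Submodule.mem_annihilator_span_singleton, smul_eq_mul]
        linear_combination -hxε⟩
      exact hP.ne_top ((P.eq_top_iff_one).2 (by simpa using P.add_mem (hpP hεp) (hxP hJx)))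
    rcases hp.1.1.mem_or_mem (hfg ▸ p.zero_mem) with hf | hg
    · exact hJ_not_le hf (le_sup_left.trans hJP)
    · exact hJ_not_le hg (le_sup_right.trans hJP)
  obtain ⟨a, ha, b, hb, hab⟩ := Submodule.mem_sup.1 (hJ ▸ Submodule.mem_top : (1 : A) ∈ J f ⊔ J g)
  obtain ⟨u, hu, huf, hau⟩ := Ideal.exists_isIdempotentElem_mem_mul_eq_self_of_mem_span ha
  obtain ⟨v, -, hvg, hbv⟩ := Ideal.exists_isIdempotentElem_mem_mul_eq_self_of_mem_span hb
  rw [Submodule.mem_annihilator_span_singleton, smul_eq_mul] at huf hvg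
  refine ⟨1 - u, hu.one_sub, by linear_combination huf, ?_⟩
  linear_combination (-(g * (1 - u))) * hab - g * hau - g * (1 - u) * hbv + (1 - u) * b * hvg

theorem isReduced_of_forall_mul_eq_zero_exists_isIdempotentElem
    (H : ∀ f g : A, f * g = 0 → ∃ e, IsIdempotentElem e ∧ f = f * e ∧ g = g * (1 - e)) :
    IsReduced A := by
  refine (isReduced_iff_pow_one_lt 2 one_lt_two).2 fun x hx => ?_
  obtain ⟨e, -, hxe, hxe'⟩ := H x x (by rw [← sq, hx])
  linear_combination hxe + hxe'

theorem isPurified_of_forall_mul_eq_zero_exists_isIdempotentElem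
    (H : ∀ f g : A, f * g = 0 → ∃ e, IsIdempotentElem e ∧ f = f * e ∧ g = g * (1 - e)) :
    IsPurified A := by
  intro p q hp hq hpq
  obtain ⟨a, ha, b, hb, hab⟩ := exists_mul_eq_zero_of_mem_minimalPrimes hp hq hpq
  obtain ⟨e, he, hbe, hae⟩ := H b a (by rw [mul_comm, hab])
  have hae' : a * e = 0 := by linear_combination hae
  have hbe' : b * (1 - e) = 0 := by linear_combination hbe
  exact ⟨e, he, (hp.1.1.mem_or_mem (hae' ▸ p.zero_mem)).resolve_left ha,
    (hq.1.1.mem_or_mem (hbe' ▸ q.zero_mem)).resolve_left hb⟩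

end

theorem reduced_purified_iff_idempotent_annihilation (A : Type*) [CommRing A] :
    (IsReduced A ∧
        ∀ p q : Ideal A, p ∈ minimalPrimes A → q ∈ minimalPrimes A → p ≠ q →
          ∃ e : A, IsIdempotentElem e ∧ e ∈ p ∧ 1 - e ∈ q) ↔
      ∀ f g : A, f * g = 0 →
        ∃ e : A, IsIdempotentElem e ∧ f = f * e ∧ g = g * (1 - e) := by
  exact ⟨fun ⟨_, hA⟩ _ _ hfg => IsPurified.exists_isIdempotentElem_of_mul_eq_zero hA hfg,
    fun H => ⟨isReduced_of_forall_mul_eq_zero_exists_isIdempotentElem H,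
      isPurified_of_forall_mul_eq_zero_exists_isIdempotentElem H⟩⟩
end
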